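/- arXiv:2009.05218 — 5 statements merged into one kernel-verified Lean document; each statement's English description precedes it below -/
import Mathlib

section
/- Let X be a finite abstract simplicial complex of dimension at least 2 and let h ∈ C² satisfy |h| ≤ |h + h'| for all h' ∈ B₂ (i.e. |h| = dist(h, B₂)). Let h₁, …, h_s be the connected components of h. Then each component is itself minimal: for every i ∈ [s] and every h' ∈ B₂, |h_i| ≤ |h_i + h'|. -/
/-- A finite abstract simplicial complex on a finite vertex set `V`:
a nonempty collection of finite subsets of `V` closed under taking subsets. -/
structure AbsSimplicialComplex (V : Type*) [DecidableEq V] [Fintype V] where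
  faces : Finset (Finset V)
  nonempty' : faces.Nonempty
  down_closed : ∀ s ∈ faces, ∀ t ⊆ s, t ∈ faces

namespace AbsSimplicialComplex

variable {V : Type*} [DecidableEq V] [Fintype V]

/-- `X.sk i` is `X(i)`, the set of faces of cardinality `i + 1` (dimension `i`). -/
def sk (X : AbsSimplicialComplex V) (i : ℕ) : Finset (Finset V) :=
  X.faces.filter fun s => s.card = i + 1

/-- `C^i`: the `𝔽₂`-vector space of functions from `X(i)` to `𝔽₂`. -/
abbrev Chain (X : AbsSimplicialComplex V) (i : ℕ) : Type _ :=
  { s // s ∈ X.sk i } → ZMod 2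

/-- The coboundary operator `δ_i : C^i → C^{i+1}`,
`(δ_i f) t = ∑_{u ∈ t} f (t \ {u}) = ∑_{s ∈ X(i), s ⊆ t} f s`. -/
def delta (X : AbsSimplicialComplex V) (i : ℕ) :
    X.Chain i →ₗ[ZMod 2] X.Chain (i + 1) where
  toFun f t := ∑ s : { s // s ∈ X.sk i }, if s.val ⊆ t.val then f s else 0
  map_add' f g := by
    funext t
    simp only [Pi.add_apply, ← Finset.sum_add_distrib]
    exact Finset.sum_congr rfl fun s _ => by split <;> simp
  map_smul' c f := by
    funext t
    simp only [Pi.smul_apply, smul_eq_mul, RingHom.id_apply, Finset.mul_sum]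
    exact Finset.sum_congr rfl fun s _ => by split <;> simp

/-- The boundary operator `∂_{i+1} : C^{i+1} → C^i`,
`(∂ f) s = ∑_{t ∈ X(i+1), t ⊇ s} f t`. -/
def boundary (X : AbsSimplicialComplex V) (i : ℕ) :
    X.Chain (i + 1) →ₗ[ZMod 2] X.Chain i where
  toFun f s := ∑ t : { t // t ∈ X.sk (i + 1) }, if s.val ⊆ t.val then f t else 0
  map_add' f g := by
    funext s
    simp only [Pi.add_apply, ← Finset.sum_add_distrib]
    exact Finset.sum_congr rfl fun t _ => by split <;> simp
  map_smul' c f := by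
    funext s
    simp only [Pi.smul_apply, smul_eq_mul, RingHom.id_apply, Finset.mul_sum]
    exact Finset.sum_congr rfl fun t _ => by split <;> simp

/-- The `𝔽₂`-valued pairing `⟨f, g⟩_i = ∑_{s ∈ X(i)} f s * g s`. -/
def pairing (X : AbsSimplicialComplex V) (i : ℕ) (f g : X.Chain i) : ZMod 2 :=
  ∑ s : { s // s ∈ X.sk i }, f s * g s

/-- The Hamming weight of a chain: the number of faces on which it is nonzero. -/
def wt (X : AbsSimplicialComplex V) {i : ℕ} (f : X.Chain i) : ℕ :=
  (Finset.univ.filter fun s => f s ≠ 0).card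

end AbsSimplicialComplex

namespace AbsSimplicialComplex

variable {V : Type*} [DecidableEq V] [Fintype V]

/-- `dist(h, B₂) = min_{g ∈ B₂} |h + g|`, the Hamming distance from the 2-chain
`h` to the space `B₂ = im ∂₃` of boundaries of 3-chains. -/
noncomputable def distB2 (X : AbsSimplicialComplex V) (h : X.Chain 2) : ℕ :=
  sInf { n : ℕ | ∃ g ∈ LinearMap.range (X.boundary 2), X.wt (h + g) = n }

/-- Two triangles share an edge if some edge of `X` is contained in both. -/
def SharesEdge (X : AbsSimplicialComplex V) (T T' : Finset V) : Prop :=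
  ∃ e ∈ X.sk 1, e ⊆ T ∧ e ⊆ T'

/-- A 2-chain is connected if any two triangles in its support are joined by a
path of triangles of the support in which consecutive triangles share an edge. -/
def IsConnectedChain (X : AbsSimplicialComplex V) (h : X.Chain 2) : Prop :=
  ∀ T T' : { s // s ∈ X.sk 2 }, h T ≠ 0 → h T' ≠ 0 →
    Relation.ReflTransGen
      (fun a b : { s // s ∈ X.sk 2 } =>
        h a ≠ 0 ∧ h b ≠ 0 ∧ X.SharesEdge a.val b.val) T T'

end AbsSimplicialComplex

/-!
Weight is additive on chains with disjoint supports and subadditive in general. Writing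
`h = hᵢ + r` with `r` the sum of the other components, `|hᵢ| + |r| = |h| ≤ |h + h'| ≤ |hᵢ + h'| + |r|`.
-/

theorem Finset.apply_eq_zero_or_sum_erase_apply_eq_zero {ι α M : Type*} [DecidableEq ι]
    [AddCommMonoid M] (f : ι → α → M) (s : Finset ι) (k : ι)
    (hdisj : ∀ j ∈ s, j ≠ k → ∀ a, f k a = 0 ∨ f j a = 0) (a : α) :
    f k a = 0 ∨ (∑ j ∈ s.erase k, f j) a = 0 := by
  by_cases hk : f k a = 0
  · exact Or.inl hk
  · refine Or.inr ?_
    rw [Finset.sum_apply]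
    exact Finset.sum_eq_zero fun j hj =>
      (hdisj j (Finset.mem_of_mem_erase hj) (Finset.ne_of_mem_erase hj) a).resolve_left hk

namespace AbsSimplicialComplex

variable {V : Type*} [DecidableEq V] [Fintype V] (X : AbsSimplicialComplex V) {i : ℕ}

theorem wt_add_le (f g : X.Chain i) : X.wt (f + g) ≤ X.wt f + X.wt g := by
  unfold wt
  refine (Finset.card_le_card fun T hT => ?_).trans (Finset.card_union_le _ _)
  simp only [Finset.mem_filter, Finset.mem_union, Finset.mem_univ, true_and, Pi.add_apply] at hT ⊢
  by_contra! hfg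
  simp [hfg.1, hfg.2] at hT

theorem wt_add_of_disjoint {f g : X.Chain i} (hfg : ∀ T, f T = 0 ∨ g T = 0) :
    X.wt (f + g) = X.wt f + X.wt g := by
  unfold wt
  rw [← Finset.card_union_of_disjoint, ← Finset.filter_or]
  · congr 1
    ext T
    rcases hfg T with hf | hg <;> simp [*]
  · rw [Finset.disjoint_filter]
    intro T _ hf hg
    exact (hfg T).elim hf hg

theorem wt_le_wt_add_of_disjoint {f g b : X.Chain i} (hfg : ∀ T, f T = 0 ∨ g T = 0)
    (hmin : X.wt (f + g) ≤ X.wt (f + g + b)) : X.wt f ≤ X.wt (f + b) := by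
  have hle : X.wt (f + g + b) ≤ X.wt (f + b) + X.wt g := by
    rw [add_right_comm]
    exact X.wt_add_le _ _
  have := X.wt_add_of_disjoint hfg
  omega

end AbsSimplicialComplex

open AbsSimplicialComplex in
theorem components_of_minimal_chain_minimal_general
    {V : Type*} [DecidableEq V] [Fintype V]
    (X : AbsSimplicialComplex V)
    (h : X.Chain 2)
    (hmin : ∀ h' ∈ LinearMap.range (X.boundary 2), X.wt h ≤ X.wt (h + h'))
    (s : ℕ) (hc : Fin s → X.Chain 2)
    (hsum : ∑ i, hc i = h)
    (hdisj : ∀ i j, i ≠ j → ∀ T : { s // s ∈ X.sk 2 },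
      ¬(hc i T ≠ 0 ∧ hc j T ≠ 0)) :
    ∀ i, ∀ h' ∈ LinearMap.range (X.boundary 2),
      X.wt (hc i) ≤ X.wt (hc i + h') := by
  intro i h' hh'
  have hsplit : hc i + ∑ j ∈ Finset.univ.erase i, hc j = h := by
    rw [Finset.add_sum_erase _ _ (Finset.mem_univ i), hsum]
  refine X.wt_le_wt_add_of_disjoint (g := ∑ j ∈ Finset.univ.erase i, hc j) ?_ ?_
  · refine Finset.apply_eq_zero_or_sum_erase_apply_eq_zero hc _ i fun j _ hji T => ?_
    simpa only [not_and_or, not_not] using hdisj i j hji.symm T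
  · rw [hsplit]
    exact hmin h' hh'

open AbsSimplicialComplex in
/-- If `h ∈ C²` is of minimal weight in its coset of `B₂`
(`|h| ≤ |h + h'|` for all `h' ∈ B₂`), and `h₁, …, h_s` are its connected
components, then each component is itself minimal: for every `i` and every
`h' ∈ B₂`, `|h_i| ≤ |h_i + h'|`. -/
theorem components_of_minimal_chain_minimal
    {V : Type*} [DecidableEq V] [Fintype V]
    (X : AbsSimplicialComplex V) (hdim : ∃ s ∈ X.faces, 3 ≤ s.card)
    (h : X.Chain 2)
    (hmin : ∀ h' ∈ LinearMap.range (X.boundary 2), X.wt h ≤ X.wt (h + h'))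
    (s : ℕ) (hc : Fin s → X.Chain 2)
    (hsum : ∑ i, hc i = h)
    (hconn : ∀ i, X.IsConnectedChain (hc i))
    (hdisj : ∀ i j, i ≠ j → ∀ T : { s // s ∈ X.sk 2 },
      ¬(hc i T ≠ 0 ∧ hc j T ≠ 0))
    (hsep : ∀ i j, i ≠ j → ∀ T T' : { s // s ∈ X.sk 2 },
      hc i T ≠ 0 → hc j T' ≠ 0 → ¬ X.SharesEdge T.val T'.val) :
    ∀ i, ∀ h' ∈ LinearMap.range (X.boundary 2),
      X.wt (hc i) ≤ X.wt (hc i + h') :=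
  components_of_minimal_chain_minimal_general X h hmin s hc hsum hdisj
end

section
/- Let X be a finite abstract simplicial complex of dimension at least 2 and let r be a positive integer. Suppose that every connected 2-chain h₀ ∈ C² with |h₀| < r and ∂₂ h₀ = 0 lies in B₂. Then every h ∈ Z₂ \ B₂ satisfies dist(h, B₂) ≥ r. -/
namespace AbsSimplicialComplex

variable {V : Type*} [DecidableEq V] [Fintype V]

/-!
If `h ∈ Z₂` had `dist(h, B₂) < r`, pick `g ∈ B₂` with `|h + g| < r`. Since `∂₂ ∂₃ = 0`, `h + g`
is a cycle. Restricting a cycle to one edge-connected component of its support gives again a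
cycle, since all triangles of the support through a given edge lie in the same component. Each
component is then a connected cycle of weight `< r`, hence a boundary, and peeling components off
one at a time shows `h + g ∈ B₂`, so `h ∈ B₂`.
-/

open Finset

variable (X : AbsSimplicialComplex V)

lemma card_of_mem_sk {i : ℕ} {s : Finset V} (hs : s ∈ X.sk i) : s.card = i + 1 :=
  (mem_filter.mp hs).2

lemma mem_faces_of_mem_sk {i : ℕ} {s : Finset V} (hs : s ∈ X.sk i) : s ∈ X.faces :=
  (mem_filter.mp hs).1

lemma boundary_apply {i : ℕ} (f : X.Chain (i + 1)) (s : { s // s ∈ X.sk i }) :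
    X.boundary i f s = ∑ t : { t // t ∈ X.sk (i + 1) }, if s.val ⊆ t.val then f t else 0 :=
  rfl

lemma card_faces_between {i : ℕ} {s u : Finset V} (hs : s ∈ X.sk i) (hu : u ∈ X.sk (i + 1 + 1))
    (hsu : s ⊆ u) : #{t ∈ X.sk (i + 1) | s ⊆ t ∧ t ⊆ u} = 2 := by
  have hdiff : #(u \ s) = 2 := by
    rw [card_sdiff_of_subset hsu, X.card_of_mem_sk hu, X.card_of_mem_sk hs]
    omega
  rw [← hdiff]
  symm
  refine card_bij (fun a _ => insert a s) ?_ ?_ ?_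
  · intro a ha
    obtain ⟨hau, has⟩ := mem_sdiff.mp ha
    refine mem_filter.mpr ⟨mem_filter.mpr ⟨X.down_closed u (X.mem_faces_of_mem_sk hu) _
      (insert_subset hau hsu), ?_⟩, subset_insert _ _, insert_subset hau hsu⟩
    rw [card_insert_of_notMem has, X.card_of_mem_sk hs]
  · intro a ha b _ hab
    exact (mem_insert.mp (hab ▸ mem_insert_self a s)).resolve_right (mem_sdiff.mp ha).2
  · intro t ht
    obtain ⟨ht, hst, htu⟩ := mem_filter.mp ht
    obtain ⟨a, hta⟩ : ∃ a, t \ s = {a} := card_eq_one.mp <| by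
      rw [card_sdiff_of_subset hst, X.card_of_mem_sk ht, X.card_of_mem_sk hs]
      omega
    have ha : a ∈ t \ s := hta ▸ mem_singleton_self a
    refine ⟨a, mem_sdiff.mpr ⟨htu (mem_sdiff.mp ha).1, (mem_sdiff.mp ha).2⟩, ?_⟩
    rw [insert_eq, union_comm, ← hta, union_sdiff_of_subset hst]

-- Every `s ⊆ u` with `|u| = |s| + 2` is counted twice in `∂ ∂ x`, via the two faces in between.
theorem boundary_boundary (i : ℕ) (x : X.Chain (i + 1 + 1)) :
    X.boundary i (X.boundary (i + 1) x) = 0 := by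
  funext s
  calc X.boundary i (X.boundary (i + 1) x) s
      = ∑ u : { u // u ∈ X.sk (i + 1 + 1) }, ∑ t ∈ X.sk (i + 1),
          if s.val ⊆ t ∧ t ⊆ u.val then x u else 0 := by
        simp only [boundary_apply, ite_and]
        rw [sum_comm, ← sum_coe_sort (X.sk (i + 1))]
        refine sum_congr rfl fun t _ => ?_
        split_ifs <;> simp
    _ = ∑ u : { u // u ∈ X.sk (i + 1 + 1) }, #{t ∈ X.sk (i + 1) | s.val ⊆ t ∧ t ⊆ u.val} • x u := by
        simp only [← sum_filter, sum_const]
    _ = 0 := by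
        refine sum_eq_zero fun u _ => ?_
        by_cases hsu : s.val ⊆ u.val
        · rw [X.card_faces_between s.2 u.2 hsu, two_nsmul, CharTwo.add_self_eq_zero]
        · rw [filter_false_of_mem fun t _ h => hsu (h.1.trans h.2), card_empty, zero_nsmul]

lemma range_boundary_le_ker_boundary (i : ℕ) :
    LinearMap.range (X.boundary (i + 1)) ≤ LinearMap.ker (X.boundary i) :=
  LinearMap.range_le_ker_iff.mpr <| LinearMap.ext (X.boundary_boundary i)

lemma exists_wt_add_eq_distB2 (h : X.Chain 2) :
    ∃ g ∈ LinearMap.range (X.boundary 2), X.wt (h + g) = X.distB2 h :=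
  Nat.sInf_mem (⟨X.wt h, 0, Submodule.zero_mem _, by rw [add_zero]⟩ :
    { n : ℕ | ∃ g ∈ LinearMap.range (X.boundary 2), X.wt (h + g) = n }.Nonempty)

lemma wt_le_wt_of_support_subset {i : ℕ} {f g : X.Chain i} (hgf : ∀ t, g t ≠ 0 → f t ≠ 0) :
    X.wt g ≤ X.wt f :=
  card_le_card fun t ht => mem_filter.mpr ⟨mem_univ t, hgf t (mem_filter.mp ht).2⟩

lemma wt_lt_wt_of_support_subset {i : ℕ} {f g : X.Chain i} (hgf : ∀ t, g t ≠ 0 → f t ≠ 0)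
    {T : { s // s ∈ X.sk i }} (hfT : f T ≠ 0) (hgT : g T = 0) : X.wt g < X.wt f :=
  card_lt_card <| (ssubset_iff_of_subset fun t ht =>
    mem_filter.mpr ⟨mem_univ t, hgf t (mem_filter.mp ht).2⟩).mpr
      ⟨T, mem_filter.mpr ⟨mem_univ T, hfT⟩, fun h => (mem_filter.mp h).2 hgT⟩

def SupportAdj (f : X.Chain 2) (a b : { s // s ∈ X.sk 2 }) : Prop :=
  f a ≠ 0 ∧ f b ≠ 0 ∧ X.SharesEdge a.val b.val

instance (f : X.Chain 2) : Std.Symm (X.SupportAdj f) where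
  symm _ _ := fun ⟨ha, hb, e, he, hea, heb⟩ => ⟨hb, ha, e, he, heb, hea⟩

open Classical in
noncomputable def component (f : X.Chain 2) (T : { s // s ∈ X.sk 2 }) : X.Chain 2 :=
  fun t => if Relation.ReflTransGen (X.SupportAdj f) T t then f t else 0

variable {X}

lemma component_apply_of_reach {f : X.Chain 2} {T t : { s // s ∈ X.sk 2 }}
    (h : Relation.ReflTransGen (X.SupportAdj f) T t) : X.component f T t = f t :=
  if_pos h

lemma component_ne_zero_iff {f : X.Chain 2} {T t : { s // s ∈ X.sk 2 }} :
    X.component f T t ≠ 0 ↔ Relation.ReflTransGen (X.SupportAdj f) T t ∧ f t ≠ 0 := by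
  unfold component
  split_ifs with h <;> simp [h]

lemma isConnectedChain_component (f : X.Chain 2) (T : { s // s ∈ X.sk 2 }) :
    X.IsConnectedChain (X.component f T) := by
  have hlift : ∀ t, Relation.ReflTransGen (X.SupportAdj f) T t →
      Relation.ReflTransGen (X.SupportAdj (X.component f T)) T t := by
    intro t h
    induction h with
    | refl => exact .refl
    | tail hTb hbc ih =>
      refine ih.tail ⟨?_, ?_, hbc.2.2⟩
      · rw [component_apply_of_reach hTb]
        exact hbc.1
      · rw [component_apply_of_reach (hTb.tail hbc)]
        exact hbc.2.1
  intro a b ha hb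
  exact (Std.Symm.symm _ _ (hlift a (component_ne_zero_iff.mp ha).1)).trans
    (hlift b (component_ne_zero_iff.mp hb).1)

-- The triangles of the support through a fixed edge pairwise share it, so they lie either all
-- inside or all outside the component.
lemma boundary_component {f : X.Chain 2} (hf : X.boundary 1 f = 0) (T : { s // s ∈ X.sk 2 }) :
    X.boundary 1 (X.component f T) = 0 := by
  funext s
  rw [boundary_apply, Pi.zero_apply]
  by_cases hin : ∃ t : { t // t ∈ X.sk 2 }, s.val ⊆ t.val ∧ X.component f T t ≠ 0
  · obtain ⟨t₀, hst₀, ht₀⟩ := hin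
    obtain ⟨hTt₀, hft₀⟩ := component_ne_zero_iff.mp ht₀
    refine (sum_congr rfl fun t _ => ?_).trans (congrFun hf s)
    split_ifs with hst
    · by_cases hft : f t = 0
      · rw [hft, ← not_ne_iff, component_ne_zero_iff]
        exact fun h => h.2 hft
      · exact component_apply_of_reach (hTt₀.tail ⟨hft₀, hft, s.val, s.2, hst₀, hst⟩)
    · rfl
  · push Not at hin
    exact sum_eq_zero fun t _ => by split_ifs with hst <;> simp [hin t, hst]

lemma wt_component_le (f : X.Chain 2) (T : { s // s ∈ X.sk 2 }) :
    X.wt (X.component f T) ≤ X.wt f :=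
  X.wt_le_wt_of_support_subset fun _ h => (component_ne_zero_iff.mp h).2

lemma wt_sub_component_lt {f : X.Chain 2} {T : { s // s ∈ X.sk 2 }} (hT : f T ≠ 0) :
    X.wt (f - X.component f T) < X.wt f := by
  refine X.wt_lt_wt_of_support_subset (fun t ht hft => ht ?_) hT ?_
  · rw [Pi.sub_apply, hft, zero_sub, neg_eq_zero, ← not_ne_iff, component_ne_zero_iff]
    exact fun h => h.2 hft
  · rw [Pi.sub_apply, component_apply_of_reach .refl, sub_self]

theorem mem_range_boundary_of_wt_lt {r : ℕ}
    (hlocal : ∀ h₀ : X.Chain 2, X.IsConnectedChain h₀ → X.wt h₀ < r →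
      X.boundary 1 h₀ = 0 → h₀ ∈ LinearMap.range (X.boundary 2))
    {f : X.Chain 2} (hf : X.boundary 1 f = 0) (hwt : X.wt f < r) :
    f ∈ LinearMap.range (X.boundary 2) := by
  induction hn : X.wt f using Nat.strong_induction_on generalizing f with
  | _ n ih =>
    by_cases hf0 : f = 0
    · exact hf0 ▸ Submodule.zero_mem _
    obtain ⟨T, hT⟩ := Function.ne_iff.mp hf0
    have hcomp : X.component f T ∈ LinearMap.range (X.boundary 2) :=
      hlocal _ (isConnectedChain_component f T) ((wt_component_le f T).trans_lt hwt)
        (boundary_component hf T)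
    have hrest : f - X.component f T ∈ LinearMap.range (X.boundary 2) :=
      ih _ (hn ▸ wt_sub_component_lt hT) (by rw [map_sub, hf, boundary_component hf T, sub_zero])
        ((wt_sub_component_lt hT).trans hwt) rfl
    simpa using add_mem hrest hcomp

end AbsSimplicialComplex

open AbsSimplicialComplex in
theorem nontrivial_cycle_far_from_boundaries_general
    {V : Type*} [DecidableEq V] [Fintype V]
    (X : AbsSimplicialComplex V)
    (r : ℕ)
    (hlocal : ∀ h₀ : X.Chain 2, X.IsConnectedChain h₀ → X.wt h₀ < r →
      X.boundary 1 h₀ = 0 → h₀ ∈ LinearMap.range (X.boundary 2)) :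
    ∀ h : X.Chain 2, h ∈ LinearMap.ker (X.boundary 1) →
      h ∉ LinearMap.range (X.boundary 2) → r ≤ X.distB2 h := by
  intro h hh hnot
  by_contra! hlt
  obtain ⟨g, hg, hwt⟩ := X.exists_wt_add_eq_distB2 h
  have hcycle : X.boundary 1 (h + g) = 0 := by
    rw [map_add, LinearMap.mem_ker.mp hh, X.range_boundary_le_ker_boundary 1 hg, add_zero]
  exact hnot (by simpa using sub_mem (mem_range_boundary_of_wt_lt hlocal hcycle (hwt ▸ hlt)) hg)

open AbsSimplicialComplex in
/-- If every connected 2-chain `h₀` with `|h₀| < r` and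
`∂₂ h₀ = 0` lies in `B₂`, then every `h ∈ Z₂ \ B₂` satisfies
`dist(h, B₂) ≥ r`. -/
theorem nontrivial_cycle_far_from_boundaries
    {V : Type*} [DecidableEq V] [Fintype V]
    (X : AbsSimplicialComplex V) (hdim : ∃ s ∈ X.faces, 3 ≤ s.card)
    (r : ℕ) (hr : 0 < r)
    (hlocal : ∀ h₀ : X.Chain 2, X.IsConnectedChain h₀ → X.wt h₀ < r →
      X.boundary 1 h₀ = 0 → h₀ ∈ LinearMap.range (X.boundary 2)) :
    ∀ h : X.Chain 2, h ∈ LinearMap.ker (X.boundary 1) →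
      h ∉ LinearMap.range (X.boundary 2) → r ≤ X.distB2 h :=
  nontrivial_cycle_far_from_boundaries_general X r hlocal
end

section
/- Let D be a finite DAG in which every non-leaf node has exactly two incoming nodes (its children), with a designated root, and let κ be a function from the nodes of D to the natural numbers such that κ(ν) ≤ κ(ν₁) + κ(ν₂) whenever ν₁, ν₂ are the two incoming nodes of ν, and κ(ν) ≤ 1 for every leaf ν. Let r ≥ 2 be an integer with κ(root) ≥ r. Then there exists a node ν of D with r/2 ≤ κ(ν) < r. -/
/-!
Walk down from the root, always moving to a child with the larger value of `κ`. By
subadditivity `κ` at most halves in each step, and the walk cannot stay at values `≥ r`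
forever: the DAG is well founded and at a leaf `κ ≤ 1 < r`. The first node reached with
`κ < r` therefore has `κ ≥ r / 2`.
-/

theorem WellFounded.exists_le_two_mul_lt {α : Type*} {R : α → α → Prop} (hR : WellFounded R)
    (f : α → ℕ) {r : ℕ} (hstep : ∀ x, r ≤ f x → ∃ y, R y x ∧ f x ≤ 2 * f y) :
    ∀ x, r ≤ f x → ∃ y, r ≤ 2 * f y ∧ f y < r := by
  intro x
  induction x using hR.induction with
  | _ x ih =>
    intro hx
    obtain ⟨y, hyx, hy⟩ := hstep x hx
    by_cases hry : r ≤ f y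
    · exact ih y hyx hry
    · exact ⟨y, by omega, by omega⟩

theorem dag_intermediate_complexity_node_general
    {N : Type*} (root : N) (kids : N → Option (N × N))
    (hacyc : WellFounded fun a b : N =>
      ∃ c, kids b = some (a, c) ∨ kids b = some (c, a))
    (κ : N → ℕ)
    (hsub : ∀ n a b : N, kids n = some (a, b) → κ n ≤ κ a + κ b)
    (hleaf : ∀ n : N, kids n = none → κ n ≤ 1)
    (r : ℕ) (hr : 2 ≤ r) (hroot : r ≤ κ root) :
    ∃ n : N, r ≤ 2 * κ n ∧ κ n < r := by
  refine hacyc.exists_le_two_mul_lt κ (fun n hn => ?_) root hroot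
  obtain hk | ⟨⟨a, b⟩, hk⟩ := Option.eq_none_or_eq_some (kids n)
  · exact absurd (hleaf n hk) (by omega)
  have hab := hsub n a b hk
  rcases le_total (κ a) (κ b) with hle | hle
  · exact ⟨b, ⟨a, Or.inr hk⟩, by omega⟩
  · exact ⟨a, ⟨b, Or.inl hk⟩, by omega⟩

/-- In a finite DAG (given by a node type `N`, a designated `root`, and a map
`kids` assigning to each non-leaf node its two incoming nodes; acyclicity is
expressed by well-foundedness of the child relation, and every node is
reachable from the root by following incoming edges), STATEMENT 13 says:
if `κ : N → ℕ` satisfies `κ ν ≤ κ ν₁ + κ ν₂` whenever `ν₁, ν₂` are the two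
incoming nodes of `ν`, and `κ ν ≤ 1` at every leaf, and if `r ≥ 2` with
`κ(root) ≥ r`, then some node `ν` has `r/2 ≤ κ ν < r`
(stated as `r ≤ 2 * κ ν ∧ κ ν < r`). -/
theorem dag_intermediate_complexity_node
    {N : Type*} [Fintype N] (root : N) (kids : N → Option (N × N))
    (hacyc : WellFounded fun a b : N =>
      ∃ c, kids b = some (a, c) ∨ kids b = some (c, a))
    (hreach : ∀ n : N, Relation.ReflTransGen
      (fun b a : N => ∃ c, kids b = some (a, c) ∨ kids b = some (c, a)) root n)
    (κ : N → ℕ)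
    (hsub : ∀ n a b : N, kids n = some (a, b) → κ n ≤ κ a + κ b)
    (hleaf : ∀ n : N, kids n = none → κ n ≤ 1)
    (r : ℕ) (hr : 2 ≤ r) (hroot : r ≤ κ root) :
    ∃ n : N, r ≤ 2 * κ n ∧ κ n < r :=
  dag_intermediate_complexity_node_general root kids hacyc κ hsub hleaf r hr hroot
end

section
/- Let Λ be a system of linear equations over F₂ in n variables (each equation a pair (A, b) with A ⊆ [n] and b ∈ F₂, meaning Σ_{i∈A} x_i = b), and suppose Λ does not admit any ⊕-resolution refutation of width at most 2t. Then there exist unit vectors u_S in a real inner product space, indexed by the subsets S ⊆ [n] with |S| ≤ t, such that: (a) ⟨u_{S₁}, u_{S₂}⟩ = ⟨u_{S₃}, u_{S₄}⟩ whenever S₁ Δ S₂ = S₃ Δ S₄ and |S₁|,|S₂|,|S₃|,|S₄| ≤ t; and (b) for every equation (T, b_T) ∈ Λ with |T| ≤ t, ⟨u_T, u_∅⟩ = (−1)^{b_T}. -/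
/-!
The derivable equations of width at most `2t`, together with the trivial equation `0 = 0`,
relate two sets `S₁, S₂` of size at most `t` with parity `b` when `(S₁ Δ S₂, b)` is one of them.
Resolution makes this relation transitive, and the absence of a refutation makes the parity
unique, so it is an equivalence relation carrying a `ℤ/2`-valued cocycle. Measuring the parity
to a fixed representative of each class turns the cocycle into a coboundary `φ S₁ + φ S₂`, and
`u_S = (-1)^{φ S} e_{[S]}`, with one orthonormal vector `e` per class, has the required Gram
matrix `⟨u_{S₁}, u_{S₂}⟩ = (-1)^b` or `0`, a function of `S₁ Δ S₂` alone.
-/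

/-- Width-`w` ⊕-resolution derivability from a system `Λ` of `𝔽₂`-linear
equations in `n` variables, each equation a pair `(A, b)` with `A ⊆ [n]` the
set of variables appearing and `b ∈ 𝔽₂` (meaning `∑_{i ∈ A} x_i = b`).
Every equation appearing in the derivation (including the axioms used) has at
most `w` variables; the only inference rule derives `(A₁ Δ A₂, b₁ + b₂)` from
`(A₁, b₁)` and `(A₂, b₂)`. -/
inductive XorDerivW {n : ℕ} (Λ : Set (Finset (Fin n) × ZMod 2)) (w : ℕ) :
    Finset (Fin n) × ZMod 2 → Prop
  | ax {e : Finset (Fin n) × ZMod 2} (he : e ∈ Λ) (hw : e.1.card ≤ w) :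
      XorDerivW Λ w e
  | res {A₁ A₂ : Finset (Fin n)} {b₁ b₂ : ZMod 2}
      (h₁ : XorDerivW Λ w (A₁, b₁)) (h₂ : XorDerivW Λ w (A₂, b₂))
      (hw : (symmDiff A₁ A₂).card ≤ w) :
      XorDerivW Λ w (symmDiff A₁ A₂, b₁ + b₂)

open Finset

open scoped RealInnerProductSpace

theorem neg_one_pow_zmod_two_val_add {R : Type*} [Ring R] (a b : ZMod 2) :
    (-1 : R) ^ (a + b).val = (-1) ^ a.val * (-1) ^ b.val := by
  rw [ZMod.val_add, ← neg_one_pow_eq_pow_mod_two (R := R), pow_add]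

theorem EuclideanSpace.real_inner_single_single {κ : Type*} [Fintype κ] [DecidableEq κ]
    (k l : κ) (a b : ℝ) :
    ⟪EuclideanSpace.single k a, EuclideanSpace.single l b⟫ = if k = l then a * b else 0 := by
  simp only [EuclideanSpace.inner_single_left, PiLp.single_apply, conj_trivial, mul_ite, mul_zero]

/-- `R i j a`: `i` and `j` are related, and the relation has parity `a`. -/
structure IsParityEquivalence {ι : Type*} (R : ι → ι → ZMod 2 → Prop) : Prop where
  refl (i : ι) : R i i 0
  symm {i j : ι} {a : ZMod 2} : R i j a → R j i a
  trans {i j k : ι} {a b : ZMod 2} : R i j a → R j k b → R i k (a + b)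
  parity_unique {i j : ι} {a b : ZMod 2} : R i j a → R i j b → a = b

namespace IsParityEquivalence

variable {ι : Type*} {R : ι → ι → ZMod 2 → Prop}

def toSetoid (hR : IsParityEquivalence R) : Setoid ι where
  r i j := ∃ a, R i j a
  iseqv :=
    ⟨fun i => ⟨0, hR.refl i⟩, fun ⟨a, h⟩ => ⟨a, hR.symm h⟩,
      fun ⟨a, h⟩ ⟨b, h'⟩ => ⟨a + b, hR.trans h h'⟩⟩

theorem exists_potential (hR : IsParityEquivalence R) :
    ∃ φ : ι → ZMod 2, ∀ {i j : ι} {a : ZMod 2}, R i j a → a = φ i + φ j := by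
  let s := hR.toSetoid
  have hrep : ∀ i, ∃ a, R i (Quotient.mk s i).out a := fun i => s.symm (Quotient.mk_out i)
  choose φ hφ using hrep
  refine ⟨φ, fun {i j a} h => hR.parity_unique h ?_⟩
  have hcls : Quotient.mk s i = Quotient.mk s j := Quotient.sound ⟨a, h⟩
  exact hR.trans (hcls ▸ hφ i) (hR.symm (hφ j))

theorem exists_euclidean_realization [Finite ι] (hR : IsParityEquivalence R) :
    ∃ (d : ℕ) (u : ι → EuclideanSpace ℝ (Fin d)),
      (∀ i j a, R i j a → ⟪u i, u j⟫ = (-1) ^ a.val) ∧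
      (∀ i j, (∀ a, ¬ R i j a) → ⟪u i, u j⟫ = 0) := by
  classical
  let s := hR.toSetoid
  obtain ⟨φ, hφ⟩ := hR.exists_potential
  let e := Finite.equivFin (Quotient s)
  refine ⟨_, fun i => EuclideanSpace.single (e (Quotient.mk s i)) ((-1) ^ (φ i).val), ?_, ?_⟩
  · intro i j a h
    have hcls : Quotient.mk s i = Quotient.mk s j := Quotient.sound ⟨a, h⟩
    rw [EuclideanSpace.real_inner_single_single, if_pos (congrArg e hcls), hφ h,
      neg_one_pow_zmod_two_val_add]
  · intro i j h
    have hcls : e (Quotient.mk s i) ≠ e (Quotient.mk s j) := fun hij =>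
      (Quotient.exact (e.injective hij)).elim h
    rw [EuclideanSpace.real_inner_single_single, if_neg hcls]

end IsParityEquivalence

theorem Finset.card_symmDiff_le {α : Type*} [DecidableEq α] (s t : Finset α) :
    (symmDiff s t).card ≤ s.card + t.card :=
  (card_le_card symmDiff_subset_union).trans (card_union_le s t)

def XorConsequence {n : ℕ} (Λ : Set (Finset (Fin n) × ZMod 2)) (w : ℕ)
    (e : Finset (Fin n) × ZMod 2) : Prop :=
  e = (∅, 0) ∨ XorDerivW Λ w e

namespace XorConsequence

variable {n w : ℕ} {Λ : Set (Finset (Fin n) × ZMod 2)} {A₁ A₂ : Finset (Fin n)} {b₁ b₂ : ZMod 2}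

theorem res (h₁ : XorConsequence Λ w (A₁, b₁)) (h₂ : XorConsequence Λ w (A₂, b₂))
    (hw : (symmDiff A₁ A₂).card ≤ w) : XorConsequence Λ w (symmDiff A₁ A₂, b₁ + b₂) := by
  rcases h₁ with h₁ | h₁
  · obtain ⟨rfl, rfl⟩ := Prod.ext_iff.mp h₁
    rwa [← bot_eq_empty, bot_symmDiff, zero_add]
  rcases h₂ with h₂ | h₂
  · obtain ⟨rfl, rfl⟩ := Prod.ext_iff.mp h₂
    rw [← bot_eq_empty, symmDiff_bot, add_zero]
    exact Or.inr h₁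
  exact Or.inr (h₁.res h₂ hw)

theorem parity_unique (hnoref : ¬ XorDerivW Λ w (∅, 1)) (h₁ : XorConsequence Λ w (A₁, b₁))
    (h₂ : XorConsequence Λ w (A₁, b₂)) : b₁ = b₂ := by
  have hsum : XorConsequence Λ w (∅, b₁ + b₂) := by simpa using h₁.res h₂ (by simp)
  refine CharTwo.add_eq_zero.mp ?_
  rcases hsum with h | h
  · exact (Prod.ext_iff.mp h).2
  · by_contra hne
    exact hnoref (Fin.eq_one_of_ne_zero (b₁ + b₂) hne ▸ h)

end XorConsequence

theorem isParityEquivalence_xorConsequence {n t : ℕ} {Λ : Set (Finset (Fin n) × ZMod 2)}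
    (hnoref : ¬ XorDerivW Λ (2 * t) (∅, 1)) :
    IsParityEquivalence fun (S₁ S₂ : {S : Finset (Fin n) // S.card ≤ t}) b =>
      XorConsequence Λ (2 * t) (symmDiff S₁.1 S₂.1, b) where
  refl S := Or.inl (by simp)
  symm h := by rwa [symmDiff_comm]
  trans {S₁ S₂ S₃ _ _} h₁₂ h₂₃ := by
    have hcancel : symmDiff (symmDiff S₁.1 S₂.1) (symmDiff S₂.1 S₃.1) = symmDiff S₁.1 S₃.1 := by
      rw [symmDiff_assoc, symmDiff_symmDiff_cancel_left]
    have hw : (symmDiff S₁.1 S₃.1).card ≤ 2 * t := by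
      have := card_symmDiff_le S₁.1 S₃.1
      omega
    simpa only [hcancel] using h₁₂.res h₂₃ (hcancel ▸ hw)
  parity_unique := XorConsequence.parity_unique hnoref

/-- If `Λ` admits no ⊕-resolution refutation (derivation of
`(∅, 1)`) of width at most `2t`, then there exist unit vectors `u_S` in a real
inner product space, indexed by the subsets `S ⊆ [n]` with `|S| ≤ t`, such that
(a) `⟨u_{S₁}, u_{S₂}⟩ = ⟨u_{S₃}, u_{S₄}⟩` whenever `S₁ Δ S₂ = S₃ Δ S₄` and all
four sets have size at most `t`, and (b) for every equation `(T, b_T) ∈ Λ` with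
`|T| ≤ t`, `⟨u_T, u_∅⟩ = (-1)^{b_T}`. -/
theorem sos_vectors_of_no_low_width_refutation
    (n t : ℕ) (Λ : Set (Finset (Fin n) × ZMod 2))
    (hnoref : ¬ XorDerivW Λ (2 * t) (∅, 1)) :
    ∃ (d : ℕ) (u : Finset (Fin n) → EuclideanSpace ℝ (Fin d)),
      (∀ S : Finset (Fin n), S.card ≤ t → ‖u S‖ = 1) ∧
      (∀ S₁ S₂ S₃ S₄ : Finset (Fin n),
        S₁.card ≤ t → S₂.card ≤ t → S₃.card ≤ t → S₄.card ≤ t →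
        symmDiff S₁ S₂ = symmDiff S₃ S₄ →
        (inner ℝ (u S₁) (u S₂) : ℝ) = inner ℝ (u S₃) (u S₄)) ∧
      (∀ (T : Finset (Fin n)) (b : ZMod 2), (T, b) ∈ Λ → T.card ≤ t →
        (inner ℝ (u T) (u ∅) : ℝ) = (-1 : ℝ) ^ b.val) := by
  obtain ⟨d, v, hv_rel, hv_unrel⟩ :=
    (isParityEquivalence_xorConsequence hnoref).exists_euclidean_realization
  let u : Finset (Fin n) → EuclideanSpace ℝ (Fin d) := fun S =>
    if h : S.card ≤ t then v ⟨S, h⟩ else 0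
  have hu (S : Finset (Fin n)) (h : S.card ≤ t) : u S = v ⟨S, h⟩ := dif_pos h
  refine ⟨d, u, fun S hS => ?_, fun S₁ S₂ S₃ S₄ h₁ h₂ h₃ h₄ hS => ?_, fun T b hT hTt => ?_⟩
  · have hself : ‖u S‖ ^ 2 = 1 := by
      rw [← real_inner_self_eq_norm_sq, hu S hS, hv_rel _ _ 0 (Or.inl (by simp))]
      simp
    exact (pow_eq_one_iff_of_nonneg (norm_nonneg _) two_ne_zero).mp hself
  · rw [hu S₁ h₁, hu S₂ h₂, hu S₃ h₃, hu S₄ h₄]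
    by_cases hcons : ∃ b, XorConsequence Λ (2 * t) (symmDiff S₁ S₂, b)
    · obtain ⟨b, hb⟩ := hcons
      rw [hv_rel _ _ b hb, hv_rel _ _ b (hS ▸ hb)]
    · simp only [not_exists] at hcons
      rw [hv_unrel _ _ hcons, hv_unrel _ _ (hS ▸ hcons)]
  · rw [hu T hTt, hu ∅ (by simp)]
    refine hv_rel _ _ b (Or.inr ?_)
    show XorDerivW Λ (2 * t) (symmDiff T ∅, b)
    rw [← bot_eq_empty, symmDiff_bot]
    exact XorDerivW.ax hT (by dsimp only; omega)
end

section
/- Let X be a finite abstract simplicial complex of dimension at least 3 and β ∈ Z² \ B². Then for every ⊕-resolution refutation of the edge-variable 3XOR instance associated to (X, β), the 2-chain h ∈ C² at the root of the refutation DAG (defined as the sum of the indicator chains of the triangles at the leaves feeding into the root) satisfies ∂₂ h = 0 and h ∉ B₂; that is, h ∈ Z₂ \ B₂. -/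
namespace AbsSimplicialComplex

variable {V : Type*} [DecidableEq V] [Fintype V]

/-- A ⊕-resolution derivation from the edge-variable 3XOR instance of `(X, β)`:
leaves are labeled by triangles of `X` (i.e. by the equations of the instance),
and each internal node resolves its two incoming nodes. -/
inductive ResTree (X : AbsSimplicialComplex V) : Type _
  | leaf : { s // s ∈ X.sk 2 } → ResTree X
  | node : ResTree X → ResTree X → ResTree X

variable {X : AbsSimplicialComplex V}

/-- The 2-chain `h_ν` of a node: the indicator chain of the triangle at a leaf,
and the sum of the chains of the two incoming nodes at an internal node. -/
def ResTree.chainOf : ResTree X → X.Chain 2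
  | .leaf T => fun s => if s = T then 1 else 0
  | .node a b => a.chainOf + b.chainOf

/-- The right-hand side `b_ν` of the equation at a node. -/
def ResTree.rhsOf (β : X.Chain 2) : ResTree X → ZMod 2
  | .leaf T => β T
  | .node a b => a.rhsOf β + b.rhsOf β

/-- The set `A_ν ⊆ X(1)` of variables in the equation at a node: the three
edges of the triangle at a leaf, and the symmetric difference of the variable
sets of the two incoming nodes at an internal node. -/
def ResTree.varsOf : ResTree X → Finset { e // e ∈ X.sk 1 }
  | .leaf T => Finset.univ.filter fun e => e.val ⊆ T.val
  | .node a b => symmDiff a.varsOf b.varsOf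

/-- The width of a derivation: the maximum number of variables in the equation
at any node. -/
def ResTree.widthOf : ResTree X → ℕ
  | .leaf T => ((ResTree.leaf T : ResTree X).varsOf).card
  | .node a b => max ((ResTree.node a b).varsOf).card (max a.widthOf b.widthOf)

end AbsSimplicialComplex

namespace AbsSimplicialComplex

variable {V : Type*} [DecidableEq V] [Fintype V] {X : AbsSimplicialComplex V}

theorem pairing_boundary {i : ℕ} (f : X.Chain i) (g : X.Chain (i + 1)) :
    X.pairing i f (X.boundary i g) = X.pairing (i + 1) (X.delta i f) g := by
  simp only [pairing, boundary, delta, LinearMap.coe_mk, AddHom.coe_mk, Finset.mul_sum,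
    Finset.sum_mul]
  rw [Finset.sum_comm]
  refine Finset.sum_congr rfl fun t _ => Finset.sum_congr rfl fun s _ => ?_
  split <;> ring

theorem pairing_eq_zero_of_mem_ker_delta_of_mem_range_boundary {i : ℕ} {f h : X.Chain i}
    (hf : f ∈ LinearMap.ker (X.delta i)) (hh : h ∈ LinearMap.range (X.boundary i)) :
    X.pairing i f h = 0 := by
  obtain ⟨g, rfl⟩ := hh
  rw [pairing_boundary, LinearMap.mem_ker.mp hf]
  simp [pairing]

theorem ResTree.rhsOf_eq_pairing (β : X.Chain 2) (ν : ResTree X) :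
    ν.rhsOf β = X.pairing 2 β ν.chainOf := by
  induction ν with
  | leaf T => simp [ResTree.rhsOf, ResTree.chainOf, pairing]
  | node a b ha hb =>
    simp only [ResTree.rhsOf, ResTree.chainOf, pairing, ha, hb, Pi.add_apply, mul_add,
      Finset.sum_add_distrib]

theorem ResTree.boundary_chainOf_apply (ν : ResTree X) (e : { e // e ∈ X.sk 1 }) :
    X.boundary 1 ν.chainOf e = if e ∈ ν.varsOf then 1 else 0 := by
  induction ν with
  | leaf T =>
    simp only [ResTree.chainOf, ResTree.varsOf, boundary, LinearMap.coe_mk, AddHom.coe_mk,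
      Finset.mem_filter, Finset.mem_univ, true_and]
    rw [Finset.sum_eq_single T (fun t _ ht => by simp [ht]) (by simp)]
    simp
  | node a b ha hb =>
    simp only [ResTree.chainOf, ResTree.varsOf, map_add, Pi.add_apply, ha, hb,
      Finset.mem_symmDiff]
    by_cases h1 : e ∈ a.varsOf <;> by_cases h2 : e ∈ b.varsOf <;> simp [h1, h2, CharTwo.add_self_eq_zero]

theorem ResTree.boundary_chainOf_eq_zero_of_varsOf_eq_empty {ν : ResTree X}
    (hν : ν.varsOf = ∅) : X.boundary 1 ν.chainOf = 0 := by
  funext e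
  simp [ν.boundary_chainOf_apply, hν]

end AbsSimplicialComplex

open AbsSimplicialComplex in
theorem refutation_root_chain_nontrivial_cycle_general
    {V : Type*} [DecidableEq V] [Fintype V]
    (X : AbsSimplicialComplex V)
    (β : X.Chain 2) (hβZ : β ∈ LinearMap.ker (X.delta 2)) :
    ∀ ν : ResTree X, ν.varsOf = ∅ → ν.rhsOf β = 1 →
      X.boundary 1 ν.chainOf = 0 ∧
        ν.chainOf ∉ LinearMap.range (X.boundary 2) := by
  intro ν hvars hrhs
  refine ⟨ν.boundary_chainOf_eq_zero_of_varsOf_eq_empty hvars, fun hB => ?_⟩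
  have hpair := pairing_eq_zero_of_mem_ker_delta_of_mem_range_boundary hβZ hB
  rw [← ν.rhsOf_eq_pairing, hrhs] at hpair
  exact one_ne_zero hpair

open AbsSimplicialComplex in
/-- If `β ∈ Z² \ B²`, then for every ⊕-resolution refutation of
the edge-variable 3XOR instance of `(X, β)` (a derivation whose root equation
is `(∅, 1)`), the 2-chain `h` at the root satisfies `∂₂ h = 0` and `h ∉ B₂`;
that is, `h ∈ Z₂ \ B₂`. -/
theorem refutation_root_chain_nontrivial_cycle
    {V : Type*} [DecidableEq V] [Fintype V]
    (X : AbsSimplicialComplex V) (hdim : ∃ s ∈ X.faces, 4 ≤ s.card)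
    (β : X.Chain 2) (hβZ : β ∈ LinearMap.ker (X.delta 2))
    (hβB : β ∉ LinearMap.range (X.delta 1)) :
    ∀ ν : ResTree X, ν.varsOf = ∅ → ν.rhsOf β = 1 →
      X.boundary 1 ν.chainOf = 0 ∧
        ν.chainOf ∉ LinearMap.range (X.boundary 2) :=
  refutation_root_chain_nontrivial_cycle_general X β hβZ
end
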